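/- arXiv:1903.10288 — 2 statements merged into one kernel-verified Lean document; each statement's English description precedes it below -/
import Mathlib

section
/- For any n ≥ 1, the product ∏_{v ∈ 𝔽₂ⁿ} (X + ℓ(v)) taken in the polynomial ring Sym(𝔽₂ⁿ)[X] (where ℓ(v) denotes the degree-1 element of the symmetric algebra corresponding to v) is a polynomial in X of the form ∑_{i=0}^{n} c_i X^{2^i} for coefficients c_i ∈ Sym(𝔽₂ⁿ), with c_n = 1; i.e., only monomials X^{2^i} with 2-power exponents occur. -/
open Polynomial

lemma key (R : Type*) [CommRing R] [CharP R 2] :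
    ∀ (n : ℕ) (f : (Fin n → ZMod 2) → R), (∀ v w, f (v + w) = f v + f w) →
      ∃ c : ℕ → R, c n = 1 ∧
        (∏ v : Fin n → ZMod 2, (X + C (f v))) =
          ∑ i ∈ Finset.range (n + 1), C (c i) * X ^ (2 ^ i) := by
  intro n
  induction n with
  | zero =>
    intro f hf
    refine ⟨fun _ => 1, rfl, ?_⟩
    have h0 : f 0 = 0 := by
      have := hf 0 0; simp at this
      simpa using this
    have : (∏ v : Fin 0 → ZMod 2, (X + C (f v))) = X + C (f 0) := by
      rw [Fintype.prod_unique]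
      exact congrArg (fun v => X + C (f v)) (Subsingleton.elim _ _)
    rw [this, h0]
    simp
  | succ n ih =>
    intro f hf
    set f0 : (Fin n → ZMod 2) → R := fun w => f (Fin.cons 0 w) with hf0
    have hf0add : ∀ v w, f0 (v + w) = f0 v + f0 w := by
      intro v w
      have : (Fin.cons 0 (v + w) : Fin (n+1) → ZMod 2) =
          Fin.cons 0 v + Fin.cons 0 w := by
        funext i
        refine Fin.cases ?_ ?_ i <;> simp
      simp only [hf0, this, hf]
    obtain ⟨c, hcn, hP⟩ := ih f0 hf0add
    set a : R := f (Fin.cons 1 0) with ha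
    set b : R := ∑ i ∈ Finset.range (n + 1), c i * a ^ (2 ^ i) with hb
    set P : R[X] := ∏ w : Fin n → ZMod 2, (X + C (f0 w)) with hPdef
    -- split product
    have hsplit : (∏ v : Fin (n+1) → ZMod 2, (X + C (f v))) = P * (P + C b) := by
      have e1 : (∏ v : Fin (n+1) → ZMod 2, (X + C (f v))) =
          ∏ p : ZMod 2 × (Fin n → ZMod 2), (X + C (f (Fin.cons p.1 p.2))) :=
        (Fintype.prod_equiv (Fin.consEquiv fun _ => ZMod 2)
          (fun p => X + C (f (Fin.cons p.1 p.2))) _ (fun p => rfl)).symm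
      rw [e1, Fintype.prod_prod_type]
      have huniv : (Finset.univ : Finset (ZMod 2)) = {0, 1} := by decide
      rw [huniv, Finset.prod_insert (by decide), Finset.prod_singleton]
      have hsecond : (∏ w : Fin n → ZMod 2, (X + C (f (Fin.cons 1 w)))) = P + C b := by
        have hcons : ∀ w : Fin n → ZMod 2, f (Fin.cons 1 w) = a + f0 w := by
          intro w
          have : (Fin.cons 1 w : Fin (n+1) → ZMod 2) = Fin.cons 1 0 + Fin.cons 0 w := by
            funext i
            refine Fin.cases ?_ ?_ i <;> simp
          rw [this, hf]
        calc (∏ w : Fin n → ZMod 2, (X + C (f (Fin.cons 1 w))))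
            = ∏ w : Fin n → ZMod 2, ((X + C (f0 w)).comp (X + C a)) := by
              apply Finset.prod_congr rfl
              intro w _
              simp [hcons w, add_comm, add_assoc, add_left_comm]
          _ = P.comp (X + C a) := by
              rw [hPdef]
              exact (map_prod (eval₂RingHom C (X + C a))
                (fun w => X + C (f0 w)) Finset.univ).symm
          _ = ∑ i ∈ Finset.range (n + 1), C (c i) * (X + C a) ^ 2 ^ i := by
              rw [hP]
              show (eval₂RingHom C (X + C a)) _ = _
              rw [map_sum]
              refine Finset.sum_congr rfl fun i _ => ?_
              simp
          _ = ∑ i ∈ Finset.range (n + 1),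
                (C (c i) * X ^ 2 ^ i + C (c i * a ^ 2 ^ i)) := by
              refine Finset.sum_congr rfl fun i _ => ?_
              rw [add_pow_char_pow, mul_add, ← C_pow, ← C_mul]
          _ = P + C b := by
              rw [Finset.sum_add_distrib, ← hP, hb, map_sum]
      rw [hsecond]
    refine ⟨fun i => (match i with | 0 => 0 | j+1 => c j ^ 2) +
      b * (if i ≤ n then c i else 0), ?_, ?_⟩
    · simp [hcn]
    · rw [hsplit]
      have expand : ∀ i : ℕ,
          C ((match i with | 0 => (0:R) | j+1 => c j ^ 2) +
            b * (if i ≤ n then c i else 0)) * X ^ 2 ^ i =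
          C (match i with | 0 => (0:R) | j+1 => c j ^ 2) * X ^ 2 ^ i +
          C (b * (if i ≤ n then c i else 0)) * X ^ 2 ^ i := by
        intro i; rw [map_add, add_mul]
      rw [Finset.sum_congr rfl fun i _ => expand i, Finset.sum_add_distrib]
      have h1 : (∑ i ∈ Finset.range (n + 1 + 1),
          C (match i with | 0 => (0:R) | j+1 => c j ^ 2) * X ^ 2 ^ i) = P ^ 2 := by
        rw [Finset.sum_range_succ']
        simp only [map_pow]
        rw [hP, sum_pow_char]
        simp only [mul_pow, ← pow_mul, ← pow_succ, map_pow]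
        simp
      have h2 : (∑ i ∈ Finset.range (n + 1 + 1),
          C (b * (if i ≤ n then c i else 0)) * X ^ 2 ^ i) = C b * P := by
        rw [Finset.sum_range_succ]
        simp only [Nat.lt_irrefl, if_neg (Nat.not_succ_le_self n), mul_zero, map_zero,
          zero_mul, add_zero]
        rw [hP, Finset.mul_sum]
        refine Finset.sum_congr rfl fun i hi => ?_
        rw [if_pos (Nat.lt_succ_iff.mp (Finset.mem_range.mp hi)), map_mul, mul_assoc]
      rw [h1, h2]
      ring

/-- The Dickson product `∏_{v ∈ 𝔽₂ⁿ} (X + ℓ(v))` in `Sym(𝔽₂ⁿ)[X]` (where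
`ℓ(v) = ∑ᵢ vᵢ tᵢ` is the degree-1 element corresponding to `v`) is a 2-linearized
polynomial: it equals `∑_{i=0}^{n} cᵢ X^{2^i}` with `cₙ = 1`. -/
theorem stmt1 (n : ℕ) (hn : 1 ≤ n) :
    ∃ c : ℕ → MvPolynomial (Fin n) (ZMod 2),
      c n = 1 ∧
      (∏ v : Fin n → ZMod 2,
          (X + C (∑ i, MvPolynomial.C (v i) * MvPolynomial.X i)
            : Polynomial (MvPolynomial (Fin n) (ZMod 2)))) =
        ∑ i ∈ Finset.range (n + 1), C (c i) * X ^ (2 ^ i) := by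
  exact key _ n (fun v => ∑ i, MvPolynomial.C (v i) * MvPolynomial.X i)
    (fun v w => by simp [Pi.add_apply, map_add, add_mul, Finset.sum_add_distrib])
end

section
/- If a graded module M over the mod-2 Steenrod algebra is concentrated in degrees 0 through 4, has its bottom class supporting a nontrivial Sq² but no nontrivial Sq³ or Sq⁴, and the iterated double 𝕕M(k) rescales all degrees by 2^k and relabels Sq^{2^j} as acting via Sq^{2^{j-k}} for j ≥ k, then the unstable degree of 𝕕M(k) (the minimal s such that Σ^s 𝕕M(k) satisfies the instability condition Sq^i x = 0 for i > |x|) equals 2·2^k. -/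
lemma cast_zero_iff {N : ℕ → Type} [∀ n, AddCommGroup (N n)] {a b : ℕ} (h : a = b)
    (y : N a) : cast (congrArg N h) y = 0 ↔ y = 0 := by subst h; exact Iff.rfl

/-- Let `M` be a graded module over the mod-2 Steenrod algebra (recorded by its graded
pieces `M n` and operations `SqM i : M n → M (n+i)`), concentrated in degrees 0–4,
whose bottom class supports a nontrivial `Sq²` but no nontrivial `Sq³` or `Sq⁴`, and
which is unstable after a shift by 2 (the maximal excess of the Joker).  Let `N` be
its `k`-fold iterated double `𝕕M(k)`: `N` vanishes in degrees not divisible by `2^k`,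
`N (2^k n) ≅ M n`, operations of index not divisible by `2^k` vanish, and
`Sq^{2^k i}` on `N (2^k n)` corresponds to `Sq^i` on `M n`.  Then the unstable degree
of `N` — the least `s` such that `Σ^s N` satisfies the instability condition
`Sq^i x = 0` for `i > |x|` — equals `2·2^k`. -/
theorem stmt10 (k : ℕ) (M N : ℕ → Type)
    [∀ n, AddCommGroup (M n)] [∀ n, Module (ZMod 2) (M n)]
    [∀ n, AddCommGroup (N n)] [∀ n, Module (ZMod 2) (N n)]
    (SqM : ∀ (i n : ℕ), M n →ₗ[ZMod 2] M (n + i))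
    (SqN : ∀ (i n : ℕ), N n →ₗ[ZMod 2] N (n + i))
    -- M is concentrated in degrees 0 through 4:
    (hconc : ∀ n, 4 < n → Subsingleton (M n))
    -- the bottom class supports a nontrivial Sq² but no nontrivial Sq³ or Sq⁴:
    (hbot2 : ∃ x : M 0, SqM 2 0 x ≠ 0)
    (hbot3 : ∀ x : M 0, SqM 3 0 x = 0)
    (hbot4 : ∀ x : M 0, SqM 4 0 x = 0)
    -- M has unstable degree at most 2 (no operation raises degree beyond |x| + 2):
    (hM : ∀ (i n : ℕ), n + 2 < i → ∀ x : M n, SqM i n x = 0)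
    -- N = 𝕕M(k): degrees are rescaled by 2^k …
    (hNzero : ∀ n, ¬ (2 ^ k ∣ n) → Subsingleton (N n))
    (e : ∀ n, N (2 ^ k * n) ≃ₗ[ZMod 2] M n)
    -- … operations of index not divisible by 2^k vanish …
    (hSqN0 : ∀ (i n : ℕ), ¬ (2 ^ k ∣ i) → ∀ x : N n, SqN i n x = 0)
    -- … and Sq^{2^k i} acts on N (2^k n) as Sq^i acts on M n:
    (hSqN : ∀ (i n : ℕ) (x : N (2 ^ k * n)),
      e (n + i)
        (cast (congrArg N (Nat.mul_add (2 ^ k) n i).symm)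
          (SqN (2 ^ k * i) (2 ^ k * n) x)) = SqM i n (e n x)) :
    IsLeast {s : ℕ | ∀ (i n : ℕ), n + s < i → ∀ x : N n, SqN i n x = 0}
      (2 * 2 ^ k) := by
  constructor
  · intro i n hlt x
    by_cases hi : 2 ^ k ∣ i
    · by_cases hn : 2 ^ k ∣ n
      · obtain ⟨i', rfl⟩ := hi
        obtain ⟨n', rfl⟩ := hn
        have hpos : 0 < 2 ^ k := Nat.two_pow_pos k
        have hlt' : n' + 2 < i' := by
          have h2 : 2 ^ k * (n' + 2) < 2 ^ k * i' := by
            rw [Nat.mul_add, Nat.mul_comm (2 ^ k) 2]; exact hlt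
          exact Nat.lt_of_mul_lt_mul_left h2
        have h1 := hSqN i' n' x
        rw [hM i' n' hlt' (e n' x)] at h1
        have h2 : cast (congrArg N (Nat.mul_add (2 ^ k) n' i').symm)
            (SqN (2 ^ k * i') (2 ^ k * n') x) = 0 :=
          (LinearEquiv.map_eq_zero_iff (e (n' + i'))).mp h1
        exact (cast_zero_iff (Nat.mul_add (2 ^ k) n' i').symm _).mp h2
      · haveI := hNzero n hn
        have : x = 0 := Subsingleton.elim x 0
        rw [this, map_zero]
    · exact hSqN0 i n hi x
  · intro s hs
    by_contra hlt
    push_neg at hlt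
    obtain ⟨x₀, hx₀⟩ := hbot2
    set x : N (2 ^ k * 0) := (e 0).symm x₀ with hx
    have hz : SqN (2 ^ k * 2) (2 ^ k * 0) x = 0 := by
      apply hs
      have : 2 ^ k * 0 = 0 := Nat.mul_zero _
      omega
    have h1 := hSqN 2 0 x
    rw [hz] at h1
    rw [(cast_zero_iff (Nat.mul_add (2 ^ k) 0 2).symm (0 : N (2 ^ k * 0 + 2 ^ k * 2))).mpr rfl,
      map_zero] at h1
    rw [LinearEquiv.apply_symm_apply] at h1
    exact hx₀ h1.symm
end
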